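/- In the unauthenticated graded consensus with core set protocol, if some honest process returns (v, 1), then every honest process returns value v (with grade 0 or 1) (coherence). -/

import Mathlib

/-!
Two subsets of a listening set of size `3k+1` overlap in at least the excess of their sizes over
`3k+1`. Since the core `G` has at least `2k+1` members and lies in every listening set, whatever
an honest process receives at least `2k+1` times was sent by at least `#G - k` core processes,
more than half of `G`, and whatever it receives at least `k+1` times was sent by some core
process. Hence any two honest round-1 values `b i`, `b j` coincide. A grade-1 output `(w, 1)`
forces `b = w` at some core process, so every honest process either holds a value `b`, which
is then `w`, or receives `w` at least `k+1` times in round 2 and adopts a value received that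
often, which is some honest `b`, hence `w`.
-/

open Finset

lemma card_add_card_le_card_add_card_inter {α : Type*} [DecidableEq α] {s t u : Finset α}
    (hs : s ⊆ u) (ht : t ⊆ u) : #s + #t ≤ #u + #(s ∩ t) := by
  rw [← card_union_add_card_inter]
  gcongr
  exact union_subset hs ht

section CoreSenders

variable {ι V : Type*} [DecidableEq ι] [DecidableEq V]

/-- The core processes that send `x` in a round where each process `s` sends `m s` when
`s ∈ L s` and stays silent otherwise. -/
def coreSenders (G : Finset ι) (L : ι → Finset ι) (m : ι → Option V) (x : V) : Finset ι :=
  G.filter fun s => s ∈ L s ∧ m s = some x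

variable {H G Li : Finset ι} {L : ι → Finset ι} {m : ι → Option V} {recv : ι → Option V}

lemma mem_coreSenders {s : ι} {x : V} :
    s ∈ coreSenders G L m x ↔ s ∈ G ∧ s ∈ L s ∧ m s = some x :=
  mem_filter

lemma coreSenders_disjoint {x y : V} (hxy : x ≠ y) :
    Disjoint (coreSenders G L m x) (coreSenders G L m y) :=
  disjoint_left.2 fun _ hx hy =>
    hxy (Option.some_injective _ ((mem_coreSenders.1 hx).2.2 ▸ (mem_coreSenders.1 hy).2.2))

lemma eq_of_card_coreSenders {k : ℕ} {x y : V} (hG : 2 * k + 1 ≤ #G)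
    (hx : #G ≤ k + #(coreSenders G L m x)) (hy : #G ≤ k + #(coreSenders G L m y)) : x = y := by
  by_contra hxy
  have hsub : coreSenders G L m x ∪ coreSenders G L m y ⊆ G :=
    union_subset (filter_subset _ _) (filter_subset _ _)
  have := card_le_card hsub
  rw [card_union_of_disjoint (coreSenders_disjoint hxy)] at this
  omega

variable (hGH : G ⊆ H) (hrecv : ∀ s ∈ H, recv s = if s ∈ L s then m s else none)
include hGH hrecv

lemma filter_received_inter_subset_coreSenders (x : V) :
    Li.filter (fun s => recv s = some x) ∩ G ⊆ coreSenders G L m x := by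
  intro s hs
  obtain ⟨hsF, hsG⟩ := mem_inter.1 hs
  have hsx := (mem_filter.1 hsF).2
  rw [hrecv s (hGH hsG)] at hsx
  split_ifs at hsx with hsL
  exact mem_coreSenders.2 ⟨hsG, hsL, hsx⟩

lemma coreSenders_subset_filter_received (hGL : G ⊆ Li) (x : V) :
    coreSenders G L m x ⊆ Li.filter fun s => recv s = some x := by
  intro s hs
  obtain ⟨hsG, hsL, hsx⟩ := mem_coreSenders.1 hs
  exact mem_filter.2 ⟨hGL hsG, by rw [hrecv s (hGH hsG), if_pos hsL, hsx]⟩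

lemma card_filter_received_add_card_le (hGL : G ⊆ Li) (x : V) :
    #(Li.filter fun s => recv s = some x) + #G ≤ #Li + #(coreSenders G L m x) :=
  calc _ ≤ #Li + #(Li.filter (fun s => recv s = some x) ∩ G) :=
        card_add_card_le_card_add_card_inter (filter_subset _ _) hGL
    _ ≤ #Li + #(coreSenders G L m x) := by
        gcongr
        exact filter_received_inter_subset_coreSenders hGH hrecv x

end CoreSenders

/-- Coherence of graded-consensus-with-core-set: each honest process `i`
has input `v i`, a listening set `L i` of size `3k+1` containing a common core `G ⊆ H` of at
least `2k+1` honest processes.  Round 1: honest `s` with `s ∈ L s` broadcasts `v s`; `b i` is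
the value received at least `2k+1` times from `L i` (else `none`).  Round 2: honest `s` with
`s ∈ L s` and `b s ≠ none` broadcasts `b s`; `out i` follows the algorithm's return rules.
If some honest process returns `(w, true)` (grade 1), then every honest process returns the
value `w` (with grade 0 or 1). -/
theorem gc_core_set_coherence {V : Type} [DecidableEq V] {n k : ℕ}
    (H G : Finset (Fin n)) (L : Fin n → Finset (Fin n)) (v : Fin n → V)
    (hL : ∀ i ∈ H, (L i).card = 3 * k + 1)
    (hGH : G ⊆ H) (hGcard : 2 * k + 1 ≤ G.card)
    (hGL : ∀ i ∈ H, G ⊆ L i)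
    -- round 1
    (recv1 : Fin n → Fin n → Option V)
    (hrecv1 : ∀ i ∈ H, ∀ s ∈ H, recv1 i s = if s ∈ L s then some (v s) else none)
    (b : Fin n → Option V)
    (hb : ∀ i ∈ H, ∀ x : V,
      (b i = some x ↔ 2 * k + 1 ≤ ((L i).filter (fun s => recv1 i s = some x)).card))
    -- round 2
    (recv2 : Fin n → Fin n → Option V)
    (hrecv2 : ∀ i ∈ H, ∀ s ∈ H, recv2 i s = if s ∈ L s then b s else none)
    -- outputs, following the return rules of the algorithm
    (out : Fin n → V × Bool)
    (hout1 : ∀ i ∈ H, ∀ x : V, b i = some x →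
      (out i).1 = x ∧
      ((out i).2 = true ↔ 2 * k + 1 ≤ ((L i).filter (fun s => recv2 i s = some x)).card))
    (hout2 : ∀ i ∈ H, b i = none →
      (out i).2 = false ∧
      ((∃ x : V, k + 1 ≤ ((L i).filter (fun s => recv2 i s = some x)).card) →
        k + 1 ≤ ((L i).filter (fun s => recv2 i s = some ((out i).1))).card) ∧
      ((¬ ∃ x : V, k + 1 ≤ ((L i).filter (fun s => recv2 i s = some x)).card) →
        (out i).1 = v i))
    (w : V) (i₀ : Fin n) (hi₀ : i₀ ∈ H) (hw : out i₀ = (w, true)) :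
    ∀ i ∈ H, (out i).1 = w := by
  have hb_unique : ∀ i ∈ H, ∀ j ∈ H, ∀ x y, b i = some x → b j = some y → x = y := by
    intro i hi j hj x y hx hy
    have hcx := card_filter_received_add_card_le hGH (hrecv1 i hi) (hGL i hi) x
    have hcy := card_filter_received_add_card_le hGH (hrecv1 j hj) (hGL j hj) y
    have := hL i hi
    have := hL j hj
    have hix := (hb i hi x).1 hx
    have hjy := (hb j hj y).1 hy
    exact eq_of_card_coreSenders (L := L) (m := fun s => some (v s)) hGcard (by omega) (by omega)
  have hi₀w : b i₀ = some w := by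
    cases hbi : b i₀ with
    | none => simpa [hw] using (hout2 i₀ hi₀ hbi).1
    | some x => simpa [hw, eq_comm] using (hout1 i₀ hi₀ x hbi).1
  have hsenders := card_filter_received_add_card_le hGH (hrecv2 i₀ hi₀) (hGL i₀ hi₀) w
  have := hL i₀ hi₀
  have hgrade := (hout1 i₀ hi₀ w hi₀w).2.1 (by rw [hw])
  obtain ⟨s₀, hs₀⟩ : (coreSenders G L b w).Nonempty := card_pos.1 (by omega)
  obtain ⟨hs₀G, -, hs₀w⟩ := mem_coreSenders.1 hs₀
  intro i hi
  cases hbi : b i with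
  | some x => rw [(hout1 i hi x hbi).1, hb_unique i hi s₀ (hGH hs₀G) x w hbi hs₀w]
  | none =>
    have := hL i hi
    have hwi := card_le_card (coreSenders_subset_filter_received hGH (hrecv2 i hi) (hGL i hi) w)
    have hout := (hout2 i hi hbi).2.1 ⟨w, by omega⟩
    have hcount := card_filter_received_add_card_le hGH (hrecv2 i hi) (hGL i hi) (out i).1
    obtain ⟨t, ht⟩ : (coreSenders G L b (out i).1).Nonempty := card_pos.1 (by omega)
    obtain ⟨htG, -, htx⟩ := mem_coreSenders.1 ht
    exact hb_unique t (hGH htG) s₀ (hGH hs₀G) _ w htx hs₀w
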